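/- arXiv:1609.01965 — 6 statements merged into one kernel-verified Lean document; each statement's English description precedes it below -/
import Mathlib

section
/- Suppose L_ζ(α+β) = df with dβ = 0, and let Z be a vector field with i_Z dα = 0 (a section of the characteristic distribution). Then the Noether function J = i_ζ(α+β) − f satisfies L_Z J = 0, i.e., J is constant along integral curves of Z. -/
variable {E : Type*} [NormedAddCommGroup E] [NormedSpace ℝ E]

/-- The exterior derivative of a 1-form `θ`, evaluated at `x` on `(v, w)`:
`dθ_x(v,w) = (D θ)_x(v)(w) - (D θ)_x(w)(v)`. -/
noncomputable def extDerivOneForm (θ : E → E →L[ℝ] ℝ) (x v w : E) : ℝ :=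
  fderiv ℝ θ x v w - fderiv ℝ θ x w v

/-- The Lie derivative of a 1-form `θ` along the vector field `ζ`, evaluated at `x` on `v`:
`(L_ζ θ)_x(v) = (D θ)_x(ζ x)(v) + θ_x((D ζ)_x v)`, which by Cartan's magic formula equals
`(i_ζ dθ + d(i_ζ θ))_x(v)`. -/
noncomputable def lieDerivOneForm (ζ : E → E) (θ : E → E →L[ℝ] ℝ) (x v : E) : ℝ :=
  fderiv ℝ θ x (ζ x) v + θ x (fderiv ℝ ζ x v)

/-- If `L_ζ(α+β) = df` with `β` closed, and `Z` is a section of `ker dα`,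
then the Noether function `J = i_ζ(α+β) - f` satisfies `L_Z J = 0`. -/
theorem noether_function_first_integral
    (α β : E → E →L[ℝ] ℝ) (f : E → ℝ) (ζ Z : E → E)
    (hα : ContDiff ℝ (⊤ : ℕ∞) α) (hβ : ContDiff ℝ (⊤ : ℕ∞) β) (hf : ContDiff ℝ (⊤ : ℕ∞) f)
    (hζ : ContDiff ℝ (⊤ : ℕ∞) ζ)
    (hclosed : ∀ x v w, extDerivOneForm β x v w = 0)
    (hlie : ∀ x v, lieDerivOneForm ζ (fun y => α y + β y) x v = fderiv ℝ f x v)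
    (hZ : ∀ x v, extDerivOneForm α x (Z x) v = 0) :
    ∀ x, fderiv ℝ (fun y => (α y + β y) (ζ y) - f y) x (Z x) = 0 := by
  intro x
  have hθ : ContDiff ℝ (⊤ : ℕ∞) (fun y => α y + β y) := hα.add hβ
  have hdθ : DifferentiableAt ℝ (fun y => α y + β y) x := (hθ.differentiable (by simp)) x
  have hdα : DifferentiableAt ℝ α x := (hα.differentiable (by simp)) x
  have hdβ : DifferentiableAt ℝ β x := (hβ.differentiable (by simp)) x
  have hdζ : DifferentiableAt ℝ ζ x := (hζ.differentiable (by simp)) x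
  have hdf : DifferentiableAt ℝ f x := (hf.differentiable (by simp)) x
  have happ : DifferentiableAt ℝ (fun y => (α y + β y) (ζ y)) x :=
    hdθ.clm_apply hdζ
  have h1 : fderiv ℝ (fun y => (α y + β y) (ζ y) - f y) x (Z x)
      = fderiv ℝ (fun y => (α y + β y) (ζ y)) x (Z x) - fderiv ℝ f x (Z x) := by
    rw [fderiv_fun_sub happ hdf]; rfl
  have h2 : fderiv ℝ (fun y => (α y + β y) (ζ y)) x (Z x)
      = (α x + β x) (fderiv ℝ ζ x (Z x))
        + fderiv ℝ (fun y => α y + β y) x (Z x) (ζ x) := by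
    rw [fderiv_clm_apply hdθ hdζ]; rfl
  have hsum : fderiv ℝ (fun y => α y + β y) x
      = fderiv ℝ α x + fderiv ℝ β x := fderiv_fun_add hdα hdβ
  have hlie' := hlie x (Z x)
  unfold lieDerivOneForm at hlie'
  have hZ' := hZ x (ζ x)
  have hcl := hclosed x (Z x) (ζ x)
  unfold extDerivOneForm at hZ' hcl
  rw [h1, h2, ← hlie', hsum]
  simp only [ContinuousLinearMap.add_apply]
  linarith
end

section
/- Let L_ζ(α+β) = df with dβ = 0, let Z satisfy i_Z dα = 0, and let P be any vector field. Then the derivative of the Noether function J = i_ζ(α+β) − f along Z+P equals dα(P, ζ): L_{Z+P} J = dα(P, ζ). -/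
variable {E : Type*} [NormedAddCommGroup E] [NormedSpace ℝ E]

/-- Perturbed Noether theorem (Theorem 2): if `L_ζ(α+β) = df` with `β` closed and
`Z` is a section of `ker dα`, then for any perturbation `P` the derivative of the
Noether function `J = i_ζ(α+β) - f` along `Z + P` equals `dα(P, ζ)`. -/
theorem noether_function_derivative_along_perturbed_flow
    (α β : E → E →L[ℝ] ℝ) (f : E → ℝ) (ζ Z P : E → E)
    (hα : ContDiff ℝ (⊤ : ℕ∞) α) (hβ : ContDiff ℝ (⊤ : ℕ∞) β) (hf : ContDiff ℝ (⊤ : ℕ∞) f)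
    (hζ : ContDiff ℝ (⊤ : ℕ∞) ζ)
    (hclosed : ∀ x v w, extDerivOneForm β x v w = 0)
    (hlie : ∀ x v, lieDerivOneForm ζ (fun y => α y + β y) x v = fderiv ℝ f x v)
    (hZ : ∀ x v, extDerivOneForm α x (Z x) v = 0) :
    ∀ x, fderiv ℝ (fun y => (α y + β y) (ζ y) - f y) x (Z x + P x)
      = extDerivOneForm α x (P x) (ζ x) := by
  intro x
  set θ : E → E →L[ℝ] ℝ := fun y => α y + β y with hθ
  have hθd : DifferentiableAt ℝ θ x :=
    ((hα.differentiable (by simp) x).add (hβ.differentiable (by simp) x))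
  have hζd : DifferentiableAt ℝ ζ x := hζ.differentiable (by simp) x
  have hfd : DifferentiableAt ℝ f x := hf.differentiable (by simp) x
  have h1 : fderiv ℝ (fun y => θ y (ζ y)) x = (θ x).comp (fderiv ℝ ζ x)
      + (fderiv ℝ θ x).flip (ζ x) := fderiv_clm_apply hθd hζd
  have hsub : fderiv ℝ (fun y => θ y (ζ y) - f y) x
      = fderiv ℝ (fun y => θ y (ζ y)) x - fderiv ℝ f x :=
    fderiv_sub (hθd.clm_apply hζd) hfd
  have hθsum : fderiv ℝ θ x = fderiv ℝ α x + fderiv ℝ β x := by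
    rw [hθ]
    exact fderiv_add (hα.differentiable (by simp) x) (hβ.differentiable (by simp) x)
  set v := Z x + P x with hv
  have key : fderiv ℝ (fun y => θ y (ζ y) - f y) x v
      = fderiv ℝ θ x v (ζ x) - fderiv ℝ θ x (ζ x) v := by
    have hl := hlie x v
    rw [hsub, h1]
    simp only [ContinuousLinearMap.sub_apply, ContinuousLinearMap.add_apply,
      ContinuousLinearMap.comp_apply, ContinuousLinearMap.flip_apply]
    rw [← hl]
    simp only [lieDerivOneForm, hθ]
    ring
  have hβ1 := hclosed x (Z x) (ζ x)
  have hβ2 := hclosed x (P x) (ζ x)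
  have hZ0 := hZ x (ζ x)
  simp only [extDerivOneForm] at hβ1 hβ2 hZ0 ⊢
  rw [key, hθsum]
  simp only [ContinuousLinearMap.add_apply, hv, map_add]
  linarith
end

section
/- If in addition to the hypotheses L_ζ(α+β) = df, dβ = 0, i_Z dα = 0, the perturbation P satisfies dα(P, ζ) = 0, then J = i_ζ(α+β) − f is a first integral of the perturbed system: L_{Z+P} J = 0. -/
variable {E : Type*} [NormedAddCommGroup E] [NormedSpace ℝ E]

/-- If moreover the perturbation `P` is `dα`-orthogonal to the symmetry field `ζ`,
then `J = i_ζ(α+β) - f` is a first integral of the perturbed system `ẋ = Z + P`. -/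
theorem noether_function_first_integral_of_perturbed_system
    (α β : E → E →L[ℝ] ℝ) (f : E → ℝ) (ζ Z P : E → E)
    (hα : ContDiff ℝ (⊤ : ℕ∞) α) (hβ : ContDiff ℝ (⊤ : ℕ∞) β) (hf : ContDiff ℝ (⊤ : ℕ∞) f)
    (hζ : ContDiff ℝ (⊤ : ℕ∞) ζ)
    (hclosed : ∀ x v w, extDerivOneForm β x v w = 0)
    (hlie : ∀ x v, lieDerivOneForm ζ (fun y => α y + β y) x v = fderiv ℝ f x v)
    (hZ : ∀ x v, extDerivOneForm α x (Z x) v = 0)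
    (hP : ∀ x, extDerivOneForm α x (P x) (ζ x) = 0) :
    ∀ x, fderiv ℝ (fun y => (α y + β y) (ζ y) - f y) x (Z x + P x) = 0 := by
  intro x
  have hθ : ContDiff ℝ (⊤ : ℕ∞) (fun y => α y + β y) := hα.add hβ
  have hdθ : DifferentiableAt ℝ (fun y => α y + β y) x := (hθ.differentiable (by simp)) x
  have hdα : DifferentiableAt ℝ α x := (hα.differentiable (by simp)) x
  have hdβ : DifferentiableAt ℝ β x := (hβ.differentiable (by simp)) x
  have hdζ : DifferentiableAt ℝ ζ x := (hζ.differentiable (by simp)) x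
  have hdf : DifferentiableAt ℝ f x := (hf.differentiable (by simp)) x
  have key : ∀ v, fderiv ℝ (fun y => (α y + β y) (ζ y) - f y) x v
      = extDerivOneForm α x v (ζ x) + extDerivOneForm β x v (ζ x) := by
    intro v
    have h1 : fderiv ℝ (fun y => (α y + β y) (ζ y) - f y) x v
        = fderiv ℝ (fun y => α y + β y) x v (ζ x)
          + (α x + β x) (fderiv ℝ ζ x v) - fderiv ℝ f x v := by
      rw [fderiv_fun_sub (hdθ.clm_apply hdζ) hdf, fderiv_clm_apply hdθ hdζ]
      simp
      ring
    have h2 := hlie x v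
    simp only [lieDerivOneForm] at h2
    have h3 : fderiv ℝ (fun y => α y + β y) x = fderiv ℝ α x + fderiv ℝ β x :=
      fderiv_add hdα hdβ
    rw [h1, ← h2]
    simp only [extDerivOneForm, h3, ContinuousLinearMap.add_apply]
    ring
  have hb : ∀ v w, extDerivOneForm β x v w = 0 := hclosed x
  rw [key, hb]
  have hlin : extDerivOneForm α x (Z x + P x) (ζ x)
      = extDerivOneForm α x (Z x) (ζ x) + extDerivOneForm α x (P x) (ζ x) := by
    simp [extDerivOneForm]; ring
  rw [hlin, hZ x (ζ x), hP x]
  ring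
end

section
/- Let ζ be a vector field, γ a 1-form, β a closed 1-form, and f a smooth function with L_ζ(α+β) = df + γ. Let Z satisfy i_Z dα = 0 and let P be a vector field satisfying dα(P,ζ) + γ(Z+P) = 0. Then J = i_ζ(α+β) − f satisfies L_{Z+P} J = 0. -/
variable {E : Type*} [NormedAddCommGroup E] [NormedSpace ℝ E]

/-- Theorem 3 (relaxed symmetry condition): if `L_ζ(α+β) = df + γ` with `β` closed,
`Z` a section of `ker dα`, and `dα(P,ζ) + γ(Z+P) = 0`, then the Noether function
`J = i_ζ(α+β) - f` is preserved along the flow of `ẋ = Z + P`. -/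
theorem noether_function_preserved_relaxed_symmetry
    (α β γ : E → E →L[ℝ] ℝ) (f : E → ℝ) (ζ Z P : E → E)
    (hα : ContDiff ℝ (⊤ : ℕ∞) α) (hβ : ContDiff ℝ (⊤ : ℕ∞) β) (hγ : ContDiff ℝ (⊤ : ℕ∞) γ)
    (hf : ContDiff ℝ (⊤ : ℕ∞) f) (hζ : ContDiff ℝ (⊤ : ℕ∞) ζ)
    (hclosed : ∀ x v w, extDerivOneForm β x v w = 0)
    (hlie : ∀ x v, lieDerivOneForm ζ (fun y => α y + β y) x v = fderiv ℝ f x v + γ x v)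
    (hZ : ∀ x v, extDerivOneForm α x (Z x) v = 0)
    (hcond : ∀ x, extDerivOneForm α x (P x) (ζ x) + γ x (Z x + P x) = 0) :
    ∀ x, fderiv ℝ (fun y => (α y + β y) (ζ y) - f y) x (Z x + P x) = 0 := by
  intro x
  set W := Z x + P x with hW
  have hαd : DifferentiableAt ℝ α x := (hα.differentiable (by simp)) x
  have hβd : DifferentiableAt ℝ β x := (hβ.differentiable (by simp)) x
  have hζd : DifferentiableAt ℝ ζ x := (hζ.differentiable (by simp)) x
  have hfd : DifferentiableAt ℝ f x := (hf.differentiable (by simp)) x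
  have hθd : DifferentiableAt ℝ (fun y => α y + β y) x := hαd.add hβd
  have hθζ : DifferentiableAt ℝ (fun y => (α y + β y) (ζ y)) x := by
    exact hθd.clm_apply hζd
  have hsub : fderiv ℝ (fun y => (α y + β y) (ζ y) - f y) x W
      = fderiv ℝ (fun y => (α y + β y) (ζ y)) x W - fderiv ℝ f x W := by
    rw [fderiv_fun_sub hθζ hfd]; rfl
  have happ : fderiv ℝ (fun y => (α y + β y) (ζ y)) x W
      = fderiv ℝ (fun y => α y + β y) x W (ζ x) + (α x + β x) (fderiv ℝ ζ x W) := by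
    rw [fderiv_clm_apply hθd hζd]
    simp [ContinuousLinearMap.flip_apply]
    ring
  have hθsum : fderiv ℝ (fun y => α y + β y) x = fderiv ℝ α x + fderiv ℝ β x :=
    fderiv_add hαd hβd
  have hl := hlie x W
  unfold lieDerivOneForm at hl
  have hz := hZ x (ζ x)
  have hc := hcond x
  unfold extDerivOneForm at hz hc
  have hcl := hclosed x W (ζ x)
  unfold extDerivOneForm at hcl
  rw [hsub, happ, hθsum]
  have hl' : (α x + β x) (fderiv ℝ ζ x W)
      = fderiv ℝ f x W + γ x W - fderiv ℝ (fun y => α y + β y) x (ζ x) W := by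
    linarith [hl]
  rw [hl', hθsum] at *
  simp only [ContinuousLinearMap.add_apply, hW] at *
  have : fderiv ℝ α x (Z x + P x) (ζ x) - fderiv ℝ α x (ζ x) (Z x + P x)
      = fderiv ℝ α x (P x) (ζ x) - fderiv ℝ α x (ζ x) (P x) := by
    simp [map_add] at hz ⊢; linarith
  simp only [map_add, ContinuousLinearMap.add_apply] at *
  linarith
end

section
/- On ℝ × T*ℝⁿ with α = p·dq − H dt, let ζ = τ ∂/∂t + Σᵢ ξᵢ ∂/∂qᵢ + Σᵢ (H ∂τ/∂qᵢ − Σⱼ (∂ξⱼ/∂qᵢ) pⱼ) ∂/∂pᵢ be the prolongation of a time-dependent vector field τ(t,q) ∂/∂t + Σᵢ ξᵢ(t,q) ∂/∂qᵢ. Then L_ζ(p·dq − H dt) = 0 holds if and only if L_ζ H = Σᵢ pᵢ ∂ξᵢ/∂t − H ∂τ/∂t. -/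
open scoped BigOperators

/-- The Poincaré–Cartan 1-form `α = p·dq − H dt` on `ℝ × ℝⁿ × ℝⁿ` with coordinates
`x = (t, q, p)`, evaluated on a tangent vector `v`. -/
noncomputable def alphaPC (n : ℕ) (H : ℝ × (Fin n → ℝ) × (Fin n → ℝ) → ℝ)
    (x v : ℝ × (Fin n → ℝ) × (Fin n → ℝ)) : ℝ :=
  (∑ j, x.2.2 j * v.2.1 j) - H x * v.1

/-- `dα = Σᵢ dpᵢ∧dqᵢ − dH∧dt` evaluated on tangent vectors `v, w`. -/
noncomputable def dPoincareCartan (n : ℕ)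
    (H : ℝ × (Fin n → ℝ) × (Fin n → ℝ) → ℝ)
    (x v w : ℝ × (Fin n → ℝ) × (Fin n → ℝ)) : ℝ :=
  (∑ i, (v.2.2 i * w.2.1 i - w.2.2 i * v.2.1 i))
    - (fderiv ℝ H x v * w.1 - fderiv ℝ H x w * v.1)

/-- The prolongation `ζ = τ ∂/∂t + Σᵢ ξᵢ ∂/∂qᵢ + Σᵢ (H ∂τ/∂qᵢ − Σⱼ (∂ξⱼ/∂qᵢ) pⱼ) ∂/∂pᵢ`
of the time-dependent vector field `τ(t,q) ∂/∂t + Σᵢ ξᵢ(t,q) ∂/∂qᵢ`. -/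
noncomputable def prolongPC (n : ℕ) (H : ℝ × (Fin n → ℝ) × (Fin n → ℝ) → ℝ)
    (τ : ℝ × (Fin n → ℝ) → ℝ) (ξ : Fin n → ℝ × (Fin n → ℝ) → ℝ)
    (x : ℝ × (Fin n → ℝ) × (Fin n → ℝ)) : ℝ × (Fin n → ℝ) × (Fin n → ℝ) :=
  (τ (x.1, x.2.1),
   fun i => ξ i (x.1, x.2.1),
   fun i => H x * fderiv ℝ τ (x.1, x.2.1) (0, Pi.single i 1)
     - ∑ j, fderiv ℝ (ξ j) (x.1, x.2.1) (0, Pi.single i 1) * x.2.2 j)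

/-- The Lie derivative `L_ζ α = i_ζ dα + d(i_ζ α)` of the Poincaré–Cartan form,
evaluated at `x` on `v`. -/
noncomputable def liePC (n : ℕ) (H : ℝ × (Fin n → ℝ) × (Fin n → ℝ) → ℝ)
    (τ : ℝ × (Fin n → ℝ) → ℝ) (ξ : Fin n → ℝ × (Fin n → ℝ) → ℝ)
    (x v : ℝ × (Fin n → ℝ) × (Fin n → ℝ)) : ℝ :=
  dPoincareCartan n H x (prolongPC n H τ ξ x) v
    + fderiv ℝ (fun y => alphaPC n H y (prolongPC n H τ ξ y)) x v

/-- Decomposition of a continuous linear functional on `ℝ × (Fin n → ℝ)` along the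
standard basis. -/
lemma clm_decompPC (n : ℕ) (φ : (ℝ × (Fin n → ℝ)) →L[ℝ] ℝ) (a : ℝ) (w : Fin n → ℝ) :
    φ (a, w) = a * φ (1, 0) + ∑ k, w k * φ (0, Pi.single k 1) := by
  have h : ((a, w) : ℝ × (Fin n → ℝ))
      = a • ((1, 0) : ℝ × (Fin n → ℝ))
        + ∑ k, w k • (((0, Pi.single k 1)) : ℝ × (Fin n → ℝ)) := by
    ext
    · simp [Prod.fst_sum]
    · simp [Prod.snd_sum, Finset.sum_apply, Pi.single_apply]
  rw [h, map_add, map_smul, map_sum, smul_eq_mul]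
  congr 1
  exact Finset.sum_congr rfl fun k _ => by rw [map_smul, smul_eq_mul]

/-- Purely algebraic cancellation underlying the Lie-derivative computation. -/
lemma keyPC (n : ℕ) (Hx b e hz hv v1 : ℝ) (p a c f vq vp : Fin n → ℝ)
    (d : Fin n → Fin n → ℝ) :
    ((∑ i, ((Hx * f i - ∑ j, d j i * p j) * vq i - vp i * a i)) - (hz * v1 - hv * b))
      + ((∑ j, (p j * (v1 * c j + ∑ k, vq k * d j k) + a j * vp j))
          - (Hx * (v1 * e + ∑ k, vq k * f k) + b * hv))
    = ((∑ i, p i * c i) - Hx * e - hz) * v1 := by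
  have h1 : (∑ j, ∑ k, p j * (vq k * d j k)) = ∑ i, ∑ j, d j i * p j * vq i := by
    rw [Finset.sum_comm]
    exact Finset.sum_congr rfl fun i _ => Finset.sum_congr rfl fun j _ => by ring
  have e1 : (∑ x, Hx * f x * vq x) = ∑ x, Hx * vq x * f x :=
    Finset.sum_congr rfl fun i _ => by ring
  have e2 : (∑ x, vp x * a x) = ∑ x, a x * vp x :=
    Finset.sum_congr rfl fun i _ => by ring
  have e3 : (∑ x, p x * (v1 * c x)) = ∑ i, p i * c i * v1 :=
    Finset.sum_congr rfl fun i _ => by ring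
  have e4 : (∑ i, Hx * (vq i * f i)) = ∑ x, Hx * vq x * f x :=
    Finset.sum_congr rfl fun i _ => by ring
  simp only [sub_mul, mul_add, add_mul, Finset.sum_add_distrib, Finset.sum_sub_distrib,
    Finset.mul_sum, Finset.sum_mul]
  rw [e1, e2]
  linear_combination h1 + e3 - e4

/-- The projection `(t,q,p) ↦ (t,q)` as a continuous linear map. -/
noncomputable def LmapPC (n : ℕ) : (ℝ × (Fin n → ℝ) × (Fin n → ℝ)) →L[ℝ] (ℝ × (Fin n → ℝ)) :=
  (ContinuousLinearMap.fst ℝ ℝ ((Fin n → ℝ) × (Fin n → ℝ))).prod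
    ((ContinuousLinearMap.fst ℝ (Fin n → ℝ) (Fin n → ℝ)).comp
      (ContinuousLinearMap.snd ℝ ℝ ((Fin n → ℝ) × (Fin n → ℝ))))

/-- The projection `(t,q,p) ↦ pⱼ` as a continuous linear map. -/
noncomputable def PmapPC (n : ℕ) (j : Fin n) : (ℝ × (Fin n → ℝ) × (Fin n → ℝ)) →L[ℝ] ℝ :=
  (ContinuousLinearMap.proj j).comp
    ((ContinuousLinearMap.snd ℝ (Fin n → ℝ) (Fin n → ℝ)).comp
      (ContinuousLinearMap.snd ℝ ℝ ((Fin n → ℝ) × (Fin n → ℝ))))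

/-- Derivative of the contraction `i_ζ α`. -/
lemma fderivF_PC (n : ℕ) (H : ℝ × (Fin n → ℝ) × (Fin n → ℝ) → ℝ) (hH : ContDiff ℝ (⊤ : ℕ∞) H)
    (τ : ℝ × (Fin n → ℝ) → ℝ) (hτ : ContDiff ℝ (⊤ : ℕ∞) τ)
    (ξ : Fin n → ℝ × (Fin n → ℝ) → ℝ) (hξ : ∀ i, ContDiff ℝ (⊤ : ℕ∞) (ξ i))
    (x v : ℝ × (Fin n → ℝ) × (Fin n → ℝ)) :
    fderiv ℝ (fun y => alphaPC n H y (prolongPC n H τ ξ y)) x v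
      = (∑ j, (x.2.2 j * fderiv ℝ (ξ j) (x.1, x.2.1) (v.1, v.2.1)
            + ξ j (x.1, x.2.1) * v.2.2 j))
        - (H x * fderiv ℝ τ (x.1, x.2.1) (v.1, v.2.1)
            + τ (x.1, x.2.1) * fderiv ℝ H x v) := by
  have hLd : HasFDerivAt (fun y : ℝ × (Fin n → ℝ) × (Fin n → ℝ) => (y.1, y.2.1))
      (LmapPC n) x := (LmapPC n).hasFDerivAt
  have hp : ∀ j, HasFDerivAt (fun y : ℝ × (Fin n → ℝ) × (Fin n → ℝ) => y.2.2 j)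
      (PmapPC n j) x := fun j => (PmapPC n j).hasFDerivAt
  have hxi : ∀ j, HasFDerivAt (fun y : ℝ × (Fin n → ℝ) × (Fin n → ℝ) => ξ j (y.1, y.2.1))
      ((fderiv ℝ (ξ j) (x.1, x.2.1)).comp (LmapPC n)) x := fun j =>
    (((hξ j).differentiable (by simp)) (x.1, x.2.1)).hasFDerivAt.comp x hLd
  have hτc : HasFDerivAt (fun y : ℝ × (Fin n → ℝ) × (Fin n → ℝ) => τ (y.1, y.2.1))
      ((fderiv ℝ τ (x.1, x.2.1)).comp (LmapPC n)) x :=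
    ((hτ.differentiable (by simp)) (x.1, x.2.1)).hasFDerivAt.comp x hLd
  have hHd : HasFDerivAt H (fderiv ℝ H x) x :=
    ((hH.differentiable (by simp)) x).hasFDerivAt
  have hsum : HasFDerivAt
      (fun y : ℝ × (Fin n → ℝ) × (Fin n → ℝ) => ∑ j, y.2.2 j * ξ j (y.1, y.2.1))
      (∑ j, (x.2.2 j • (fderiv ℝ (ξ j) (x.1, x.2.1)).comp (LmapPC n)
        + ξ j (x.1, x.2.1) • PmapPC n j)) x :=
    HasFDerivAt.fun_sum fun j _ => (hp j).mul (hxi j)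
  have hmul2 : HasFDerivAt
      (fun y : ℝ × (Fin n → ℝ) × (Fin n → ℝ) => H y * τ (y.1, y.2.1))
      (H x • ((fderiv ℝ τ (x.1, x.2.1)).comp (LmapPC n)) + τ (x.1, x.2.1) • fderiv ℝ H x)
      x := hHd.mul hτc
  have hF : HasFDerivAt (fun y : ℝ × (Fin n → ℝ) × (Fin n → ℝ) =>
      (∑ j, y.2.2 j * ξ j (y.1, y.2.1)) - H y * τ (y.1, y.2.1)) _ x := hsum.sub hmul2
  have heq : (fun y => alphaPC n H y (prolongPC n H τ ξ y))
      = fun y : ℝ × (Fin n → ℝ) × (Fin n → ℝ) =>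
        (∑ j, y.2.2 j * ξ j (y.1, y.2.1)) - H y * τ (y.1, y.2.1) := rfl
  rw [heq, hF.fderiv]
  simp [ContinuousLinearMap.sub_apply, ContinuousLinearMap.add_apply,
    ContinuousLinearMap.smul_apply, ContinuousLinearMap.coe_sum', Finset.sum_apply,
    ContinuousLinearMap.comp_apply, LmapPC, PmapPC, smul_eq_mul]

/-- The Lie derivative of the Poincaré–Cartan form is proportional to `dt`. -/
lemma liePC_eq (n : ℕ) (H : ℝ × (Fin n → ℝ) × (Fin n → ℝ) → ℝ) (hH : ContDiff ℝ (⊤ : ℕ∞) H)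
    (τ : ℝ × (Fin n → ℝ) → ℝ) (hτ : ContDiff ℝ (⊤ : ℕ∞) τ)
    (ξ : Fin n → ℝ × (Fin n → ℝ) → ℝ) (hξ : ∀ i, ContDiff ℝ (⊤ : ℕ∞) (ξ i))
    (x v : ℝ × (Fin n → ℝ) × (Fin n → ℝ)) :
    liePC n H τ ξ x v
      = ((∑ i, x.2.2 i * fderiv ℝ (ξ i) (x.1, x.2.1) (1, 0))
          - H x * fderiv ℝ τ (x.1, x.2.1) (1, 0)
          - fderiv ℝ H x (prolongPC n H τ ξ x)) * v.1 := by
  have hτd := clm_decompPC n (fderiv ℝ τ (x.1, x.2.1)) v.1 v.2.1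
  have hx : (∑ j, (x.2.2 j * fderiv ℝ (ξ j) (x.1, x.2.1) (v.1, v.2.1)
        + ξ j (x.1, x.2.1) * v.2.2 j))
      = ∑ j, (x.2.2 j * (v.1 * fderiv ℝ (ξ j) (x.1, x.2.1) (1, 0)
          + ∑ k, v.2.1 k * fderiv ℝ (ξ j) (x.1, x.2.1) (0, Pi.single k 1))
          + ξ j (x.1, x.2.1) * v.2.2 j) :=
    Finset.sum_congr rfl fun j _ => by
      rw [clm_decompPC n (fderiv ℝ (ξ j) (x.1, x.2.1)) v.1 v.2.1]
  simp only [liePC]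
  rw [fderivF_PC n H hH τ hτ ξ hξ x v, hx, hτd]
  simp only [dPoincareCartan, prolongPC]
  exact keyPC n (H x) (τ (x.1, x.2.1)) (fderiv ℝ τ (x.1, x.2.1) (1, 0))
    (fderiv ℝ H x (τ (x.1, x.2.1),
      fun i => ξ i (x.1, x.2.1),
      fun i => H x * fderiv ℝ τ (x.1, x.2.1) (0, Pi.single i 1)
        - ∑ j, fderiv ℝ (ξ j) (x.1, x.2.1) (0, Pi.single i 1) * x.2.2 j))
    (fderiv ℝ H x v) v.1 x.2.2 (fun j => ξ j (x.1, x.2.1))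
    (fun j => fderiv ℝ (ξ j) (x.1, x.2.1) (1, 0))
    (fun k => fderiv ℝ τ (x.1, x.2.1) (0, Pi.single k 1)) v.2.1 v.2.2
    (fun j k => fderiv ℝ (ξ j) (x.1, x.2.1) (0, Pi.single k 1))

/-- Invariance criterion (equation (29)): for the prolonged vector field `ζ`,
`L_ζ(p·dq − H dt) = 0` holds if and only if
`L_ζ H = Σᵢ pᵢ ∂ξᵢ/∂t − H ∂τ/∂t`. -/
theorem prolonged_noether_symmetry_iff (n : ℕ)
    (H : ℝ × (Fin n → ℝ) × (Fin n → ℝ) → ℝ) (hH : ContDiff ℝ (⊤ : ℕ∞) H)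
    (τ : ℝ × (Fin n → ℝ) → ℝ) (hτ : ContDiff ℝ (⊤ : ℕ∞) τ)
    (ξ : Fin n → ℝ × (Fin n → ℝ) → ℝ) (hξ : ∀ i, ContDiff ℝ (⊤ : ℕ∞) (ξ i)) :
    (∀ x v, liePC n H τ ξ x v = 0)
    ↔ (∀ x : ℝ × (Fin n → ℝ) × (Fin n → ℝ),
        fderiv ℝ H x (prolongPC n H τ ξ x)
          = (∑ i, x.2.2 i * fderiv ℝ (ξ i) (x.1, x.2.1) (1, 0))
            - H x * fderiv ℝ τ (x.1, x.2.1) (1, 0)) := by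
  constructor
  · intro h x
    have hv := h x (1, 0, 0)
    rw [liePC_eq n H hH τ hτ ξ hξ x (1, 0, 0)] at hv
    simp only [mul_one] at hv
    rw [sub_eq_zero] at hv
    exact hv.symm
  · intro h x v
    rw [liePC_eq n H hH τ hτ ξ hξ x v, h x, sub_self, zero_mul]
end

section
/- Consider the charged particle of the previous example with ε = 0, k_x = k_z = 0, constraint a(t) y ẋ − ż = 0 (so b ≡ 0) and reaction force R = λ(a(t)y, 0, −1). Then along every solution satisfying the constraint, the function (p_x + a(t) y p_z)/√(1 + a(t)² y²), evaluated with p_z = a(t) y p_x, is constant; equivalently F(t,x,y,z,ẋ,ẏ,ż) = m ẋ √(1 + a(t)² y²) is a first integral. -/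
/-- The particle of Example 1 with `ε = 0`, `k_x = k_z = 0`, subject to the homogeneous
time-dependent constraint `a(t) y ẋ − ż = 0` with reaction force `R = λ (a(t) y, 0, −1)`:
the gauge-symmetry Noether function `F = m ẋ √(1 + a(t)² y²)`
(equal to `(p_x + a y p_z)/√(1 + a² y²)` with `p_z = a y p_x` on the constraint manifold)
is a first integral along constrained motions. -/
theorem gauge_symmetry_integral
    (m g ky : ℝ) (hm : 0 < m)
    (a lam : ℝ → ℝ) (x y z : ℝ → ℝ)
    (ha : ContDiff ℝ (⊤ : ℕ∞) a)
    (hx : ContDiff ℝ (⊤ : ℕ∞) x) (hy : ContDiff ℝ (⊤ : ℕ∞) y) (hz : ContDiff ℝ (⊤ : ℕ∞) z)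
    (heqx : ∀ t, m * deriv (deriv x) t = lam t * (a t * y t))
    (heqy : ∀ t, m * deriv (deriv y) t = m * g * ky)
    (heqz : ∀ t, m * deriv (deriv z) t = - lam t)
    (hconstr : ∀ t, a t * y t * deriv x t - deriv z t = 0) :
    ∀ t, deriv (fun s => m * deriv x s * Real.sqrt (1 + (a s)^2 * (y s)^2)) t = 0 := by
  intro t
  -- differentiability facts
  have hdx := (contDiff_infty_iff_deriv.1 (hx.of_le (by simp))).2
  have hdz := (contDiff_infty_iff_deriv.1 (hz.of_le (by simp))).2
  set A := a t with hA
  set Y := y t with hY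
  set A' := deriv a t
  set Y' := deriv y t
  set X' := deriv x t
  set X'' := deriv (deriv x) t
  have hda : HasDerivAt a A' t := (ha.differentiable (by simp) t).hasDerivAt
  have hdy : HasDerivAt y Y' t := (hy.differentiable (by simp) t).hasDerivAt
  have hdX : HasDerivAt (deriv x) X'' t := (hdx.differentiable (by simp) t).hasDerivAt
  -- derivative of the inner function q s = 1 + a s ^2 * y s ^2
  have hq : HasDerivAt (fun s => 1 + (a s)^2 * (y s)^2)
      ((2 * A * A') * Y^2 + A^2 * (2 * Y * Y')) t := by
    have h1 : HasDerivAt (fun s => (a s)^2) (2 * A * A') t := by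
      have := hda.pow 2
      exact this.congr_deriv (by norm_num [hA])
    have h2 : HasDerivAt (fun s => (y s)^2) (2 * Y * Y') t := by
      have := hdy.pow 2
      exact this.congr_deriv (by norm_num [hY])
    simpa using (h1.mul h2).const_add 1
  have hQpos : (0:ℝ) < 1 + A^2 * Y^2 := by positivity
  set S := Real.sqrt (1 + A^2 * Y^2) with hS
  have hSpos : 0 < S := Real.sqrt_pos.2 hQpos
  have hsq : HasDerivAt (fun s => Real.sqrt (1 + (a s)^2 * (y s)^2))
      (((2 * A * A') * Y^2 + A^2 * (2 * Y * Y')) / (2 * S)) t := by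
    have := (Real.hasDerivAt_sqrt (ne_of_gt hQpos)).comp t hq
    exact this.congr_deriv (by rw [← hS]; ring)
  have hprod : HasDerivAt (fun s => m * deriv x s * Real.sqrt (1 + (a s)^2 * (y s)^2))
      ((m * X'') * S + (m * X') * (((2 * A * A') * Y^2 + A^2 * (2 * Y * Y')) / (2 * S))) t :=
    ((hdX.const_mul m).mul hsq)
  rw [hprod.deriv]
  -- compute λ from the constraint
  have hzz : deriv z = fun s => a s * y s * deriv x s := by
    funext s; have := hconstr s; linarith
  have hZ'' : deriv (deriv z) t = (A' * Y + A * Y') * X' + A * Y * X'' := by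
    rw [hzz]
    have : HasDerivAt (fun s => a s * y s * deriv x s)
        ((A' * Y + A * Y') * X' + A * Y * X'') t := (hda.mul hdy).mul hdX
    exact this.deriv
  have h1 := heqz t
  rw [hZ''] at h1
  have h2 : m * X'' = lam t * (A * Y) := heqx t
  -- key identity: lam t * (1 + A^2*Y^2) = - m * (A'*Y + A*Y') * X'
  have hkey : lam t * (1 + A^2 * Y^2) = - (m * (A' * Y + A * Y') * X') := by
    linear_combination h1 - (A*Y) * h2
  have hS2 : S^2 = 1 + A^2 * Y^2 := Real.sq_sqrt (le_of_lt hQpos)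
  field_simp
  linear_combination (S^2) * h2 + (A*Y) * hkey + (lam t*A*Y) * hS2
end
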